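/- arXiv:1807.03907 — 6 statements merged into one kernel-verified Lean document; each statement's English description precedes it below -/
import Mathlib

section
/- Let f : ℝⁿ × ℝᵐ → ℝ be twice continuously differentiable with ∇f Lipschitz with constant L, and let 0 < α < 1/L. Let (x*,y*) be a local min-max critical point of f such that the matrix H(x*,y*) has only real eigenvalues. Then the spectral radius of the Jacobian I + αH(x*,y*) of the GDA map at (x*,y*) is at most 1, i.e., (x*,y*) is GDA-stable. -/
open Filter Topology MeasureTheory Matrix

noncomputable section

abbrev Euc (n : ℕ) : Type := EuclideanSpace ℝ (Fin n)

/-- Partial gradient of `f` with respect to the first (`x`) variable. -/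
noncomputable def gradX {n m : ℕ} (f : Euc n × Euc m → ℝ) (p : Euc n × Euc m) : Euc n :=
  gradient (fun x => f (x, p.2)) p.1

/-- Partial gradient of `f` with respect to the second (`y`) variable. -/
noncomputable def gradY {n m : ℕ} (f : Euc n × Euc m → ℝ) (p : Euc n × Euc m) : Euc m :=
  gradient (fun y => f (p.1, y)) p.2

/-- The GDA (gradient descent/ascent) update map with step size `α`:
`h(x,y) = (x - α ∇ₓ f(x,y), y + α ∇ᵧ f(x,y))`. -/
noncomputable def gda {n m : ℕ} (f : Euc n × Euc m → ℝ) (α : ℝ) (p : Euc n × Euc m) :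
    Euc n × Euc m :=
  (p.1 - α • gradX f p, p.2 + α • gradY f p)

/-- The standard basis vectors of `ℝⁿ × ℝᵐ`. -/
noncomputable def bVec (n m : ℕ) : Fin n ⊕ Fin m → Euc n × Euc m
  | Sum.inl i => (EuclideanSpace.single i 1, 0)
  | Sum.inr j => (0, EuclideanSpace.single j 1)

/-- Second directional derivative of `f` at `p` in directions `u, v`. -/
noncomputable def dD {n m : ℕ} (f : Euc n × Euc m → ℝ) (p u v : Euc n × Euc m) : ℝ :=
  fderiv ℝ (fun q => fderiv ℝ f q v) p u

/-- The matrix `H = [[-∇²ₓₓ f, -∇²ₓᵧ f], [∇²ᵧₓ f, ∇²ᵧᵧ f]]` of `f` at `p`. -/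
noncomputable def Hmat {n m : ℕ} (f : Euc n × Euc m → ℝ) (p : Euc n × Euc m) :
    Matrix (Fin n ⊕ Fin m) (Fin n ⊕ Fin m) ℝ :=
  Matrix.of fun i j =>
    (Sum.elim (fun _ => (-1 : ℝ)) (fun _ => (1 : ℝ)) i) * dD f p (bVec n m i) (bVec n m j)

/-- The set of complex eigenvalues of a real square matrix. -/
noncomputable def specC {ι : Type} [Fintype ι] [DecidableEq ι] (M : Matrix ι ι ℝ) : Set ℂ :=
  spectrum ℂ (M.map (Complex.ofReal))

/-- The Jacobian `I + αH` of the GDA update map at `p`. -/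
noncomputable def Jgda {n m : ℕ} (f : Euc n × Euc m → ℝ) (α : ℝ) (p : Euc n × Euc m) :
    Matrix (Fin n ⊕ Fin m) (Fin n ⊕ Fin m) ℝ :=
  1 + α • Hmat f p

/-- `(x*,y*)` is a local min-max point of `f`: there is a neighborhood `U` of `(x*,y*)`
such that `f(x*,y) ≤ f(x*,y*) ≤ f(x,y*)` for all `(x,y) ∈ U`. -/
def IsLocalMinMax {n m : ℕ} (f : Euc n × Euc m → ℝ) (p : Euc n × Euc m) : Prop :=
  ∃ U ∈ 𝓝 p, ∀ q ∈ U, f (p.1, q.2) ≤ f p ∧ f p ≤ f (q.1, p.2)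

/-!
Write `H = S A` with `A` the Hessian of `f` in the standard basis and `S = diag(-1, 1)`. The
eigenvalues of `I + αH` are `1 + α r` with `r` an eigenvalue of `H`, real by hypothesis, so it has
a real eigenvector `v = (x, y)`, and `A v = r S v`. Pairing with `S v` gives
`r ‖v‖² = yᵀ A_yy y - xᵀ A_xx x ≤ 0`, because the min-max property makes `A_xx` positive and
`A_yy` negative semidefinite (second-order test along lines). As `S` is orthogonal,
`|r| ‖v‖ = ‖A v‖ ≤ 2L ‖v‖`, the factor `2` coming from the max norm on `ℝⁿ × ℝᵐ` in which `∇f` is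
Lipschitz. Hence `-2 < -2αL ≤ α r ≤ 0`.
-/

section Spectrum
variable {ι : Type} [Fintype ι] [DecidableEq ι]

theorem exists_mem_specC_of_mem_specC_one_add_smul {M : Matrix ι ι ℝ} {α : ℝ} (hα : α ≠ 0)
    {μ : ℂ} (hμ : μ ∈ specC (1 + α • M)) : ∃ ν ∈ specC M, μ = 1 + α * ν := by
  have hmap : (1 + α • M).map Complex.ofReal
      = algebraMap ℂ _ 1 + (Units.mk0 (α : ℂ) (by exact_mod_cast hα)) • M.map Complex.ofReal := by
    ext i j
    simp [Matrix.one_apply, apply_ite Complex.ofReal, Units.smul_def]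
  rw [specC, hmap, ← spectrum.singleton_add_eq, spectrum.unit_smul_eq_smul] at hμ
  obtain ⟨_, rfl, _, ⟨ν, hν, rfl⟩, rfl⟩ := hμ
  exact ⟨ν, hν, by simp⟩

theorem exists_mulVec_eq_smul_of_mem_specC {M : Matrix ι ι ℝ} {r : ℝ} (hr : (r : ℂ) ∈ specC M) :
    ∃ v ≠ 0, M *ᵥ v = r • v := by
  have hℝ : r ∈ spectrum ℝ M :=
    AlgHom.spectrum_apply_subset (Algebra.ofId ℝ ℂ).mapMatrix M
      ((spectrum.algebraMap_mem_iff ℂ).mp hr)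
  rw [← Matrix.spectrum_toLin', ← Module.End.hasEigenvalue_iff_mem_spectrum] at hℝ
  obtain ⟨v, hv⟩ := hℝ.exists_hasEigenvector
  exact ⟨v, hv.2, by simpa [Matrix.toLin'_apply] using hv.apply_eq_smul⟩

end Spectrum

section SignedMatrix
variable {ι κ : Type*} [Fintype ι] [Fintype κ]

theorem dotProduct_self_pos {v : ι → ℝ} (hv : v ≠ 0) : 0 < v ⬝ᵥ v := by
  simpa using dotProduct_self_star_pos_iff.mpr hv

theorem diagonal_mulVec_dotProduct_self [DecidableEq ι] {s : ι → ℝ} (hs : ∀ i, s i ^ 2 = 1)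
    (w : ι → ℝ) :
    diagonal s *ᵥ w ⬝ᵥ diagonal s *ᵥ w = w ⬝ᵥ w := by
  refine Finset.sum_congr rfl fun i _ => ?_
  simp only [mulVec_diagonal]
  linear_combination w i ^ 2 * hs i

theorem sq_le_of_diagonal_mul_mulVec_eq_smul [DecidableEq ι] {A : Matrix ι ι ℝ} {s : ι → ℝ}
    (hs : ∀ i, s i ^ 2 = 1) {c : ℝ} (hA : ∀ v, A *ᵥ v ⬝ᵥ A *ᵥ v ≤ c * (v ⬝ᵥ v))
    {v : ι → ℝ} (hv : v ≠ 0) {r : ℝ} (h : (diagonal s * A) *ᵥ v = r • v) : r ^ 2 ≤ c := by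
  rw [← mulVec_mulVec] at h
  have key : r ^ 2 * (v ⬝ᵥ v) ≤ c * (v ⬝ᵥ v) := calc
    r ^ 2 * (v ⬝ᵥ v) = r • v ⬝ᵥ r • v := by simp only [smul_dotProduct, dotProduct_smul]; ring
    _ = A *ᵥ v ⬝ᵥ A *ᵥ v := by rw [← h, diagonal_mulVec_dotProduct_self hs]
    _ ≤ c * (v ⬝ᵥ v) := hA v
  exact le_of_mul_le_mul_right key (dotProduct_self_pos hv)

theorem Matrix.IsSymm.dotProduct_mulVec_comm {A : Matrix ι ι ℝ} (hA : A.IsSymm) (u v : ι → ℝ) :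
    u ⬝ᵥ A *ᵥ v = v ⬝ᵥ A *ᵥ u := by
  rw [dotProduct_mulVec, ← mulVec_transpose, hA.eq, dotProduct_comm]

def signature (ι κ : Type*) : ι ⊕ κ → ℝ := Sum.elim (fun _ => -1) (fun _ => 1)

theorem nonpos_of_diagonal_signature_mul_mulVec_eq_smul [DecidableEq ι] [DecidableEq κ]
    {A : Matrix (ι ⊕ κ) (ι ⊕ κ) ℝ}
    (hA : A.IsSymm) (hι : ∀ x : ι → ℝ, 0 ≤ Sum.elim x 0 ⬝ᵥ A *ᵥ Sum.elim x 0)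
    (hκ : ∀ y : κ → ℝ, Sum.elim 0 y ⬝ᵥ A *ᵥ Sum.elim 0 y ≤ 0)
    {v : ι ⊕ κ → ℝ} (hv : v ≠ 0) {r : ℝ}
    (h : (diagonal (signature ι κ) * A) *ᵥ v = r • v) : r ≤ 0 := by
  set vx : ι ⊕ κ → ℝ := Sum.elim (v ∘ Sum.inl) 0
  set vy : ι ⊕ κ → ℝ := Sum.elim 0 (v ∘ Sum.inr)
  have hv_eq : v = vx + vy := by ext (i | j) <;> simp [vx, vy]
  have hsv : diagonal (signature ι κ) *ᵥ v = vy - vx := by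
    ext (i | j) <;> simp [vx, vy, signature, mulVec_diagonal]
  have hsq : ∀ k, signature ι κ k ^ 2 = 1 := by rintro (i | j) <;> simp [signature]
  have hAv : A *ᵥ v = r • (vy - vx) := by
    rw [← hsv, ← mulVec_smul, ← h, mulVec_mulVec, ← mul_assoc, diagonal_mul_diagonal]
    simp [← sq, hsq]
  have key : r * (v ⬝ᵥ v) = vy ⬝ᵥ A *ᵥ vy - vx ⬝ᵥ A *ᵥ vx := calc
    r * (v ⬝ᵥ v) = (vy - vx) ⬝ᵥ A *ᵥ v := by
      rw [hAv, dotProduct_smul, ← hsv, diagonal_mulVec_dotProduct_self hsq, smul_eq_mul]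
    _ = vy ⬝ᵥ A *ᵥ vy - vx ⬝ᵥ A *ᵥ vx := by
      rw [hv_eq, mulVec_add, sub_dotProduct, dotProduct_add, dotProduct_add,
        hA.dotProduct_mulVec_comm vy vx]
      ring
  exact nonpos_of_mul_nonpos_left (by linarith [hι (v ∘ Sum.inl), hκ (v ∘ Sum.inr)])
    (dotProduct_self_pos hv)

end SignedMatrix

theorem IsLocalMin.nonneg_of_hasDerivAt_of_hasDerivAt {φ ψ : ℝ → ℝ} {x₀ c : ℝ}
    (hmin : IsLocalMin φ x₀) (hφ : ∀ t, HasDerivAt φ (ψ t) t) (hψ : HasDerivAt ψ c x₀) :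
    0 ≤ c := by
  by_contra! hc
  set g : ℝ → ℝ := fun t => φ t - c / 4 * (t - x₀) ^ 2
  -- `g` still has negative second derivative, so it has a local max at `x₀`; together with the
  -- local min of `φ` this forces `(t - x₀)² ≤ 0` near `x₀`.
  have hg : ∀ t, HasDerivAt g (ψ t - c / 2 * (t - x₀)) t := fun t => by
    have hq := ((hasDerivAt_id t).sub_const x₀).pow 2 |>.const_mul (c / 4)
    exact (hφ t).sub (hq.congr_deriv (by simp; ring))
  have hg' : HasDerivAt (deriv g) (c / 2) x₀ := by
    rw [funext fun t => (hg t).deriv]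
    exact hψ.sub (((hasDerivAt_id x₀).sub_const x₀).const_mul (c / 2)) |>.congr_deriv (by ring)
  have hmax : IsLocalMax g x₀ :=
    isLocalMax_of_deriv_deriv_neg (by rw [hg'.deriv]; linarith)
      (by rw [(hg x₀).deriv, hmin.hasDerivAt_eq_zero (hφ x₀)]; simp)
      (hg x₀).continuousAt
  have hsq : ∀ᶠ t in 𝓝 x₀, (t - x₀) ^ 2 ≤ 0 := by
    filter_upwards [hmin, hmax] with t h₁ h₂
    have : φ t - c / 4 * (t - x₀) ^ 2 ≤ φ x₀ := by simpa [g] using h₂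
    nlinarith
  obtain ⟨t, ht, hne⟩ :=
    ((hsq.filter_mono nhdsWithin_le_nhds).and (self_mem_nhdsWithin (s := {x₀}ᶜ))).exists
  exact hne (by simpa [sub_eq_zero] using le_antisymm ht (sq_nonneg _))

theorem IsLocalMax.nonpos_of_hasDerivAt_of_hasDerivAt {φ ψ : ℝ → ℝ} {x₀ c : ℝ}
    (hmax : IsLocalMax φ x₀) (hφ : ∀ t, HasDerivAt φ (ψ t) t) (hψ : HasDerivAt ψ c x₀) :
    c ≤ 0 :=
  neg_nonneg.mp <| hmax.neg.nonneg_of_hasDerivAt_of_hasDerivAt (fun t => (hφ t).neg) hψ.neg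

section LineRestriction
variable {E : Type*} [NormedAddCommGroup E] [NormedSpace ℝ E] {f : E → ℝ} {p z : E}

theorem tendsto_add_smul_nhds_zero (p z : E) :
    Tendsto (fun t : ℝ => p + t • z) (𝓝 0) (𝓝 p) :=
  (continuous_const.add (continuous_id.smul continuous_const)).tendsto' 0 p (by simp)

theorem hasDerivAt_comp_line (hf : Differentiable ℝ f) (t : ℝ) :
    HasDerivAt (fun t : ℝ => f (p + t • z)) (fderiv ℝ f (p + t • z) z) t := by
  have hline : HasDerivAt (fun t : ℝ => p + t • z) z t := by
    simpa using ((hasDerivAt_id t).smul_const z).const_add p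
  exact (hf _).hasFDerivAt.comp_hasDerivAt t hline

theorem hasDerivAt_fderiv_comp_line (hf : DifferentiableAt ℝ (fderiv ℝ f) p) :
    HasDerivAt (fun t : ℝ => fderiv ℝ f (p + t • z) z) (fderiv ℝ (fderiv ℝ f) p z z) 0 := by
  have hline : HasDerivAt (fun t : ℝ => p + t • z) z 0 := by
    simpa using ((hasDerivAt_id (0 : ℝ)).smul_const z).const_add p
  have := (hf.hasFDerivAt.comp_hasDerivAt_of_eq 0 hline (by simp)).clm_apply
    (hasDerivAt_const 0 z)
  simpa using this

theorem IsLocalMin.fderiv_fderiv_apply_self_nonneg (hf : Differentiable ℝ f)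
    (hf' : DifferentiableAt ℝ (fderiv ℝ f) p) (hmin : IsLocalMin (fun t : ℝ => f (p + t • z)) 0) :
    0 ≤ fderiv ℝ (fderiv ℝ f) p z z :=
  hmin.nonneg_of_hasDerivAt_of_hasDerivAt (hasDerivAt_comp_line hf)
    (hasDerivAt_fderiv_comp_line hf')

theorem IsLocalMax.fderiv_fderiv_apply_self_nonpos (hf : Differentiable ℝ f)
    (hf' : DifferentiableAt ℝ (fderiv ℝ f) p) (hmax : IsLocalMax (fun t : ℝ => f (p + t • z)) 0) :
    fderiv ℝ (fderiv ℝ f) p z z ≤ 0 :=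
  hmax.nonpos_of_hasDerivAt_of_hasDerivAt (hasDerivAt_comp_line hf)
    (hasDerivAt_fderiv_comp_line hf')

end LineRestriction

section ProdBasis
variable {n m : ℕ}

def prodBasis (n m : ℕ) : Module.Basis (Fin n ⊕ Fin m) ℝ (Euc n × Euc m) :=
  (EuclideanSpace.basisFun (Fin n) ℝ).toBasis.prod (EuclideanSpace.basisFun (Fin m) ℝ).toBasis

theorem coe_prodBasis : ⇑(prodBasis n m) = bVec n m := by
  ext (i | j) : 1 <;> simp [prodBasis, bVec, EuclideanSpace.basisFun_toBasis]

theorem prodBasis_equivFun_symm (v : Fin n ⊕ Fin m → ℝ) :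
    (prodBasis n m).equivFun.symm v =
      (WithLp.toLp 2 (v ∘ Sum.inl), WithLp.toLp 2 (v ∘ Sum.inr)) := by
  rw [LinearEquiv.symm_apply_eq]
  ext (i | j) <;> simp [prodBasis]

theorem norm_prodBasis_equivFun_symm_sq_le (v : Fin n ⊕ Fin m → ℝ) :
    ‖(prodBasis n m).equivFun.symm v‖ ^ 2 ≤ v ⬝ᵥ v := by
  have hv : v ⬝ᵥ v = ‖WithLp.toLp 2 (v ∘ Sum.inl)‖ ^ 2 + ‖WithLp.toLp 2 (v ∘ Sum.inr)‖ ^ 2 := by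
    rw [EuclideanSpace.real_norm_sq_eq, EuclideanSpace.real_norm_sq_eq]
    simp [dotProduct, Fintype.sum_sum_type, sq]
  rw [prodBasis_equivFun_symm, Prod.norm_def, hv]
  rcases max_choice ‖WithLp.toLp 2 (v ∘ Sum.inl)‖ ‖WithLp.toLp 2 (v ∘ Sum.inr)‖ with h | h <;>
    rw [h] <;> simp only [le_add_iff_nonneg_right, le_add_iff_nonneg_left] <;> positivity

theorem sum_sq_apply_prodBasis_le (φ : (Euc n × Euc m) →L[ℝ] ℝ) :
    ∑ i, φ (prodBasis n m i) ^ 2 ≤ ‖φ‖ ^ 2 := by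
  set w := (prodBasis n m).equivFun.symm fun i => φ (prodBasis n m i)
  have hφw : φ w = ∑ i, φ (prodBasis n m i) ^ 2 := by
    simp [w, Module.Basis.equivFun_symm_apply, map_sum, sq]
  have hw : ‖w‖ ^ 2 ≤ ∑ i, φ (prodBasis n m i) ^ 2 :=
    (norm_prodBasis_equivFun_symm_sq_le _).trans_eq (by simp [dotProduct, sq])
  have hle : φ w ≤ ‖φ‖ * ‖w‖ := (le_abs_self _).trans (φ.le_opNorm w)
  nlinarith [norm_nonneg φ, norm_nonneg w, sq_nonneg (‖φ‖ - ‖w‖), sq_nonneg (‖φ‖ * ‖w‖ - φ w)]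

end ProdBasis

section Hessian
variable {n m : ℕ} {f : Euc n × Euc m → ℝ} {p : Euc n × Euc m}

def hessian (f : Euc n × Euc m → ℝ) (p : Euc n × Euc m) :
    Matrix (Fin n ⊕ Fin m) (Fin n ⊕ Fin m) ℝ :=
  LinearMap.toMatrix₂ (prodBasis n m) (prodBasis n m) (fderiv ℝ (fderiv ℝ f) p).toLinearMap₁₂

theorem dD_eq_fderiv_fderiv (hf : DifferentiableAt ℝ (fderiv ℝ f) p) (u v : Euc n × Euc m) :
    dD f p u v = fderiv ℝ (fderiv ℝ f) p u v := by
  simp [dD, fderiv_clm_apply hf (differentiableAt_const v)]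

theorem Hmat_eq_diagonal_mul_hessian (hf : DifferentiableAt ℝ (fderiv ℝ f) p) :
    Hmat f p = diagonal (signature (Fin n) (Fin m)) * hessian f p := by
  ext i j
  simp [Hmat, hessian, signature, diagonal_mul, coe_prodBasis, dD_eq_fderiv_fderiv hf]

theorem hessian_isSymm (hf : ContDiffAt ℝ 2 f p) : (hessian f p).IsSymm := by
  ext i j
  simp [hessian, hf.isSymmSndFDerivAt (by simp) (prodBasis n m i) (prodBasis n m j)]

theorem dotProduct_hessian_mulVec (u v : Fin n ⊕ Fin m → ℝ) :
    u ⬝ᵥ hessian f p *ᵥ v = fderiv ℝ (fderiv ℝ f) p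
      ((prodBasis n m).equivFun.symm u) ((prodBasis n m).equivFun.symm v) :=
  dotProduct_toMatrix₂_mulVec (prodBasis n m) (prodBasis n m)
    (fderiv ℝ (fderiv ℝ f) p).toLinearMap₁₂ u v

theorem hessian_mulVec_dotProduct_self_le (hf : ContDiffAt ℝ 2 f p) {C : ℝ}
    (hC : ‖fderiv ℝ (fderiv ℝ f) p‖ ≤ C) (v : Fin n ⊕ Fin m → ℝ) :
    hessian f p *ᵥ v ⬝ᵥ hessian f p *ᵥ v ≤ C ^ 2 * (v ⬝ᵥ v) := by
  set w := (prodBasis n m).equivFun.symm v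
  have hcoord : ∀ i, (hessian f p *ᵥ v) i = fderiv ℝ (fderiv ℝ f) p w (prodBasis n m i) := by
    intro i
    rw [← single_one_dotProduct i (hessian f p *ᵥ v), dotProduct_hessian_mulVec,
      Basis.equivFun_symm_single, hf.isSymmSndFDerivAt (by simp)]
  calc hessian f p *ᵥ v ⬝ᵥ hessian f p *ᵥ v
      = ∑ i, fderiv ℝ (fderiv ℝ f) p w (prodBasis n m i) ^ 2 := by simp [dotProduct, hcoord, sq]
    _ ≤ ‖fderiv ℝ (fderiv ℝ f) p w‖ ^ 2 := sum_sq_apply_prodBasis_le _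
    _ ≤ (‖fderiv ℝ (fderiv ℝ f) p‖ * ‖w‖) ^ 2 := by
      gcongr; exact ContinuousLinearMap.le_opNorm _ _
    _ ≤ C ^ 2 * (v ⬝ᵥ v) := by
      rw [mul_pow]; gcongr; exact norm_prodBasis_equivFun_symm_sq_le v

end Hessian

section MinMax
variable {n m : ℕ} {f : Euc n × Euc m → ℝ} {p : Euc n × Euc m}

theorem IsLocalMinMax.isLocalMin_line (hmm : IsLocalMinMax f p) {z : Euc n × Euc m}
    (hz : z.2 = 0) : IsLocalMin (fun t : ℝ => f (p + t • z)) 0 := by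
  obtain ⟨U, hU, hmmU⟩ := hmm
  filter_upwards [tendsto_add_smul_nhds_zero p z hU] with t ht
  have hpt : ((p + t • z).1, p.2) = p + t • z := Prod.ext rfl (by simp [hz])
  have := (hmmU _ ht).2
  rw [hpt] at this
  simpa using this

theorem IsLocalMinMax.isLocalMax_line (hmm : IsLocalMinMax f p) {z : Euc n × Euc m}
    (hz : z.1 = 0) : IsLocalMax (fun t : ℝ => f (p + t • z)) 0 := by
  obtain ⟨U, hU, hmmU⟩ := hmm
  filter_upwards [tendsto_add_smul_nhds_zero p z hU] with t ht
  have hpt : (p.1, (p + t • z).2) = p + t • z := Prod.ext (by simp [hz]) rfl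
  have := (hmmU _ ht).1
  rw [hpt] at this
  simpa using this

theorem IsLocalMinMax.dotProduct_hessian_mulVec_inl_nonneg (hmm : IsLocalMinMax f p)
    (hf : Differentiable ℝ f) (hf' : DifferentiableAt ℝ (fderiv ℝ f) p) (x : Fin n → ℝ) :
    0 ≤ Sum.elim x 0 ⬝ᵥ hessian f p *ᵥ Sum.elim x 0 := by
  rw [dotProduct_hessian_mulVec]
  exact IsLocalMin.fderiv_fderiv_apply_self_nonneg hf hf'
    (hmm.isLocalMin_line (by rw [prodBasis_equivFun_symm]; rfl))

theorem IsLocalMinMax.dotProduct_hessian_mulVec_inr_nonpos (hmm : IsLocalMinMax f p)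
    (hf : Differentiable ℝ f) (hf' : DifferentiableAt ℝ (fderiv ℝ f) p) (y : Fin m → ℝ) :
    Sum.elim 0 y ⬝ᵥ hessian f p *ᵥ Sum.elim 0 y ≤ 0 := by
  rw [dotProduct_hessian_mulVec]
  exact IsLocalMax.fderiv_fderiv_apply_self_nonpos hf hf'
    (hmm.isLocalMax_line (by rw [prodBasis_equivFun_symm]; rfl))

end MinMax

section Gradient
variable {n m : ℕ} {f : Euc n × Euc m → ℝ}

-- `Euc n × Euc m` carries the max norm and no inner product; this is the Euclidean pairing.
def pairing : (Euc n × Euc m) →L[ℝ] (Euc n × Euc m) →L[ℝ] ℝ :=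
  (innerSL ℝ).bilinearComp (.fst ℝ _ _) (.fst ℝ _ _) +
    (innerSL ℝ).bilinearComp (.snd ℝ _ _) (.snd ℝ _ _)

theorem pairing_apply (g v : Euc n × Euc m) :
    pairing g v = inner ℝ g.1 v.1 + inner ℝ g.2 v.2 := rfl

theorem norm_pairing_le : ‖(pairing : (Euc n × Euc m) →L[ℝ] _)‖ ≤ 2 := by
  refine ContinuousLinearMap.opNorm_le_bound₂ _ zero_le_two fun g v => ?_
  rw [pairing_apply]
  calc |inner ℝ g.1 v.1 + inner ℝ g.2 v.2|
      ≤ ‖g.1‖ * ‖v.1‖ + ‖g.2‖ * ‖v.2‖ :=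
        (abs_add_le _ _).trans
          (add_le_add (abs_real_inner_le_norm _ _) (abs_real_inner_le_norm _ _))
    _ ≤ ‖g‖ * ‖v‖ + ‖g‖ * ‖v‖ := by
        gcongr <;> first | exact norm_fst_le _ | exact norm_snd_le _
    _ = 2 * ‖g‖ * ‖v‖ := by ring

theorem fderiv_eq_pairing {q : Euc n × Euc m} (hf : DifferentiableAt ℝ f q) :
    fderiv ℝ f q = pairing (gradX f q, gradY f q) := by
  have hx : HasFDerivAt (fun x => f (x, q.2)) ((fderiv ℝ f q).comp (.inl ℝ _ _)) q.1 :=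
    hf.hasFDerivAt.comp q.1 (hasFDerivAt_prodMk_left q.1 q.2)
  have hy : HasFDerivAt (fun y => f (q.1, y)) ((fderiv ℝ f q).comp (.inr ℝ _ _)) q.2 :=
    hf.hasFDerivAt.comp q.2 (hasFDerivAt_prodMk_right q.1 q.2)
  ext v
  · simp [pairing_apply, gradX, gradient, hx.fderiv]
  · simp [pairing_apply, gradY, gradient, hy.fderiv]

theorem norm_fderiv_fderiv_le_of_lipschitzWith (hf : Differentiable ℝ f) {K : NNReal}
    (hK : LipschitzWith K fun q => (gradX f q, gradY f q)) (p : Euc n × Euc m) :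
    ‖fderiv ℝ (fderiv ℝ f) p‖ ≤ 2 * K := by
  have hlip : LipschitzWith (‖(pairing : (Euc n × Euc m) →L[ℝ] _)‖₊ * K) (fderiv ℝ f) := by
    rw [show fderiv ℝ f = _ from funext fun q => fderiv_eq_pairing (hf q)]
    exact pairing.lipschitz.comp hK
  refine (norm_fderiv_le_of_lipschitz ℝ hlip).trans ?_
  push_cast
  gcongr
  exact norm_pairing_le

end Gradient

theorem localMinMax_gda_stable_general {n m : ℕ} (f : Euc n × Euc m → ℝ) (L α : ℝ)
    (hf : ContDiff ℝ 2 f)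
    (hL : LipschitzWith (Real.toNNReal L) (fun p => (gradX f p, gradY f p)))
    (hα : 0 < α) (hα' : α < 1 / L)
    (pstar : Euc n × Euc m)
    (hmm : IsLocalMinMax f pstar)
    (hreal : ∀ μ ∈ specC (Hmat f pstar), μ.im = 0) :
    ∀ μ ∈ specC (Jgda f α pstar), ‖μ‖ ≤ 1 := by
  intro μ hμ
  have hL0 : 0 < L := one_div_pos.mp (hα.trans hα')
  have hαL : α * L < 1 := (lt_div_iff₀ hL0).mp (by simpa using hα')
  have hf₁ : Differentiable ℝ f := hf.differentiable two_ne_zero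
  have hf₂ : DifferentiableAt ℝ (fderiv ℝ f) pstar :=
    (hf.fderiv_right (m := 1) le_rfl).differentiable one_ne_zero pstar
  obtain ⟨ν, hν, rfl⟩ := exists_mem_specC_of_mem_specC_one_add_smul hα.ne' hμ
  obtain ⟨r, rfl⟩ : ∃ r : ℝ, ν = r := ⟨ν.re, Complex.ext rfl (by simpa using hreal ν hν)⟩
  obtain ⟨v, hv, hrv⟩ := exists_mulVec_eq_smul_of_mem_specC hν
  rw [Hmat_eq_diagonal_mul_hessian hf₂] at hrv
  have hr_nonpos : r ≤ 0 :=
    nonpos_of_diagonal_signature_mul_mulVec_eq_smul (hessian_isSymm hf.contDiffAt)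
      (hmm.dotProduct_hessian_mulVec_inl_nonneg hf₁ hf₂)
      (hmm.dotProduct_hessian_mulVec_inr_nonpos hf₁ hf₂) hv hrv
  have hr_sq : r ^ 2 ≤ (2 * L) ^ 2 := by
    have hnorm := norm_fderiv_fderiv_le_of_lipschitzWith hf₁ hL pstar
    rw [Real.coe_toNNReal L hL0.le] at hnorm
    exact sq_le_of_diagonal_mul_mulVec_eq_smul (by rintro (i | j) <;> simp [signature])
      (hessian_mulVec_dotProduct_self_le hf.contDiffAt hnorm) hv hrv
  have hr_ge : -(2 * L) ≤ r := (abs_le_of_sq_le_sq' hr_sq (by positivity)).1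
  rw [show (1 : ℂ) + α * r = ((1 + α * r : ℝ) : ℂ) by push_cast; ring, Complex.norm_real,
    Real.norm_eq_abs, abs_le]
  constructor <;> nlinarith

/-- Let `f : ℝⁿ × ℝᵐ → ℝ` be twice continuously differentiable with
`∇f` Lipschitz with constant `L` and `0 < α < 1/L`.  If `(x*,y*)` is a local min-max
critical point of `f` such that the matrix `H(x*,y*)` has only real eigenvalues, then
the spectral radius of the GDA Jacobian `I + αH(x*,y*)` is at most `1`,
i.e. `(x*,y*)` is GDA-stable. -/
theorem localMinMax_gda_stable {n m : ℕ} (f : Euc n × Euc m → ℝ) (L α : ℝ)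
    (hf : ContDiff ℝ 2 f)
    (hL : LipschitzWith (Real.toNNReal L) (fun p => (gradX f p, gradY f p)))
    (hα : 0 < α) (hα' : α < 1 / L)
    (pstar : Euc n × Euc m) (hcrit : fderiv ℝ f pstar = 0)
    (hmm : IsLocalMinMax f pstar)
    (hreal : ∀ μ ∈ specC (Hmat f pstar), μ.im = 0) :
    ∀ μ ∈ specC (Jgda f α pstar), ‖μ‖ ≤ 1 :=
  localMinMax_gda_stable_general f L α hf hL hα hα' pstar hmm hreal
end
end

section
/- Let f(x,y) = -x²/8 - y²/2 + (3/5)xy on ℝ². Then (0,0) is a critical point of f which is not a local min-max point, yet for every α with 0 < α < 1/1.34, both (complex) eigenvalues of the Jacobian of the GDA map at (0,0), namely the matrix [[1 + α/4, -3α/5],[3α/5, 1 - α]], have modulus strictly less than 1. Hence there exist GDA-stable critical points which are not local min-max points. -/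
open Filter Topology Matrix Asymptotics

/-!
Along the `x`-axis `f (x, 0) = -x² / 8` has a strict maximum at `0`, so the origin cannot be a
minimum in `x`. The characteristic polynomial of the GDA Jacobian factors as
`(μ - (1 - α / 5)) * (μ - (1 - 11 α / 20))`, so both eigenvalues are real and lie in `(-1, 1)`
as soon as `0 < α < 40 / 11`.
-/

theorem hasFDerivAt_zero_of_isBigO_norm_sq {E F : Type*} [NormedAddCommGroup E] [NormedSpace ℝ E]
    [NormedAddCommGroup F] [NormedSpace ℝ F] {f : E → F} (h0 : f 0 = 0)
    (h : f =O[𝓝 0] fun x => ‖x‖ ^ 2) : HasFDerivAt f (0 : E →L[ℝ] F) 0 := by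
  rw [hasFDerivAt_iff_isLittleO_nhds_zero]
  simpa [h0] using h.trans_isLittleO (isLittleO_norm_pow_id one_lt_two)

theorem hasFDerivAt_quadratic_zero (a b c : ℝ) :
    HasFDerivAt (fun p : ℝ × ℝ => a * p.1 ^ 2 + b * p.2 ^ 2 + c * p.1 * p.2)
      (0 : ℝ × ℝ →L[ℝ] ℝ) 0 := by
  refine hasFDerivAt_zero_of_isBigO_norm_sq (by simp) ?_
  have h1 : (fun p : ℝ × ℝ => p.1) =O[𝓝 0] fun p => ‖p‖ :=
    isBigO_fst_prod'.trans (isBigO_refl _ _).norm_right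
  have h2 : (fun p : ℝ × ℝ => p.2) =O[𝓝 0] fun p => ‖p‖ :=
    isBigO_snd_prod'.trans (isBigO_refl _ _).norm_right
  simp only [sq, mul_assoc]
  exact (((h1.mul h1).const_mul_left a).add ((h2.mul h2).const_mul_left b)).add
    ((h1.mul h2).const_mul_left c)

theorem not_isLocalMin_of_forall_ne_lt {X β : Type*} [TopologicalSpace X] [Preorder β]
    {g : X → β} {a : X} [(𝓝[≠] a).NeBot] (h : ∀ x ≠ a, g x < g a) : ¬IsLocalMin g a := by
  intro hmin
  obtain ⟨x, hx, hxa⟩ :=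
    ((hmin.filter_mono nhdsWithin_le_nhds).and (eventually_mem_nhdsWithin (s := {a}ᶜ))).exists
  exact (h x hxa).not_ge hx

theorem isLocalMin_fst_slice {X Y β : Type*} [TopologicalSpace X] [TopologicalSpace Y]
    [Preorder β] {f : X × Y → β} {p : X × Y} {U : Set (X × Y)} (hU : U ∈ 𝓝 p)
    (h : ∀ q ∈ U, f p ≤ f (q.1, p.2)) : IsLocalMin (fun x => f (x, p.2)) p.1 :=
  have hslice : Tendsto (fun x => (x, p.2)) (𝓝 p.1) (𝓝 p) :=
    (continuous_id.prodMk continuous_const).tendsto p.1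
  eventually_of_mem (hslice hU) fun _ => h _

theorem Matrix.eq_or_eq_of_mem_spectrum_fin_two {K : Type*} [Field K]
    {A : Matrix (Fin 2) (Fin 2) K} {a b μ : K} (htr : A.trace = a + b) (hdet : A.det = a * b)
    (hμ : μ ∈ spectrum K A) : μ = a ∨ μ = b := by
  rw [mem_spectrum_iff_isRoot_charpoly, charpoly_fin_two, htr, hdet] at hμ
  have hroot : (μ - a) * (μ - b) = 0 := by
    simp only [Polynomial.IsRoot, Polynomial.eval_add, Polynomial.eval_sub, Polynomial.eval_mul,
      Polynomial.eval_pow, Polynomial.eval_C, Polynomial.eval_X] at hμ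
    linear_combination hμ
  simpa only [mul_eq_zero, sub_eq_zero] using hroot

theorem eq_or_eq_of_mem_spectrum_gda_jacobian {α : ℝ} {μ : ℂ} (hμ : μ ∈ spectrum ℂ
    ((!![1 + α / 4, -(3 * α / 5); 3 * α / 5, 1 - α]).map Complex.ofReal)) :
    μ = ↑(1 - α / 5) ∨ μ = ↑(1 - 11 * α / 20) := by
  refine eq_or_eq_of_mem_spectrum_fin_two ?_ ?_ hμ
  · simp only [trace_fin_two, map_apply, of_apply, cons_val', cons_val_zero, cons_val_one,
      cons_val_fin_one]
    push_cast
    ring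
  · simp only [det_fin_two, map_apply, of_apply, cons_val', cons_val_zero, cons_val_one,
      cons_val_fin_one]
    push_cast
    ring

/-- For `f(x,y) = -x²/8 - y²/2 + (3/5)xy`, the origin is a critical
point of `f` which is not a local min-max point, yet for every `0 < α < 1/1.34` both
complex eigenvalues of the GDA Jacobian `[[1 + α/4, -3α/5], [3α/5, 1 - α]]` at the
origin have modulus strictly less than `1`.  Hence there exist GDA-stable critical
points which are not local min-max points. -/
theorem gda_stable_not_localMinMax
    (f : ℝ × ℝ → ℝ) (hf : ∀ p : ℝ × ℝ, f p = -(p.1 ^ 2) / 8 - p.2 ^ 2 / 2 + (3 / 5) * p.1 * p.2) :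
    fderiv ℝ f (0, 0) = 0 ∧
    ¬ (∃ U ∈ 𝓝 ((0, 0) : ℝ × ℝ), ∀ q ∈ U, f (0, q.2) ≤ f (0, 0) ∧ f (0, 0) ≤ f (q.1, 0)) ∧
    ∀ α : ℝ, 0 < α → α < 1 / 1.34 →
      ∀ μ ∈ spectrum ℂ
        ((!![1 + α / 4, -(3 * α / 5); 3 * α / 5, 1 - α]).map Complex.ofReal),
        ‖μ‖ < 1 := by
  refine ⟨?_, ?_, ?_⟩
  · have hquad : f = fun p => -(1 / 8) * p.1 ^ 2 + -(1 / 2) * p.2 ^ 2 + 3 / 5 * p.1 * p.2 :=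
      funext fun p => by rw [hf]; ring
    rw [hquad]
    exact (hasFDerivAt_quadratic_zero _ _ _).fderiv
  · rintro ⟨U, hU, hminmax⟩
    have hmin : IsLocalMin (fun x => f (x, 0)) 0 :=
      isLocalMin_fst_slice hU fun q hq => (hminmax q hq).2
    refine not_isLocalMin_of_forall_ne_lt (fun x hx => ?_) hmin
    simp only [hf]
    nlinarith [sq_pos_of_ne_zero hx]
  · intro α hα hα' μ hμ
    norm_num at hα'
    rcases eq_or_eq_of_mem_spectrum_gda_jacobian hμ with rfl | rfl <;>
      rw [Complex.norm_real, Real.norm_eq_abs, abs_lt] <;> constructor <;> linarith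
end

section
/- Let f : ℝⁿ × ℝᵐ → ℝ be twice continuously differentiable, α > 0, and let (x*,y*) be a critical point of f. Let J_GDA = I + αH(x*,y*) be the Jacobian of the GDA map at (x*,y*), and let J_OGDA be the Jacobian of the OGDA map at (x*,y*,x*,y*). Then for every complex number λ with λ ≠ 1/2, λ is an eigenvalue of J_OGDA if and only if (λ² + λ - 1)/(2λ - 1) is an eigenvalue of J_GDA. In particular, 1/2 is never an eigenvalue of J_OGDA, and if 1 + r is an eigenvalue of J_GDA then every complex root of λ² - (1 + 2r)λ + r = 0 is an eigenvalue of J_OGDA. -/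
open Filter Topology MeasureTheory Matrix

noncomputable section

/-- The OGDA (optimistic gradient descent/ascent) update map with step size `α`,
acting on pairs `((x_t, y_t), (x_{t-1}, y_{t-1}))`. -/
noncomputable def ogda {n m : ℕ} (f : Euc n × Euc m → ℝ) (α : ℝ)
    (q : (Euc n × Euc m) × (Euc n × Euc m)) : (Euc n × Euc m) × (Euc n × Euc m) :=
  ((q.1.1 - (2 * α) • gradX f q.1 + α • gradX f q.2,
    q.1.2 + (2 * α) • gradY f q.1 - α • gradY f q.2), q.1)

/-- The full Hessian matrix `∇²f` of `f` at `p`. -/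
noncomputable def hessMat {n m : ℕ} (f : Euc n × Euc m → ℝ) (p : Euc n × Euc m) :
    Matrix (Fin n ⊕ Fin m) (Fin n ⊕ Fin m) ℝ :=
  Matrix.of fun i j => dD f p (bVec n m i) (bVec n m j)

/-- The Jacobian of the OGDA update map at a fixed point `(p, p)`, in block form
`[[I + 2αH, -αH], [I, 0]]` where `H = H(p)`. -/
noncomputable def Jogda {n m : ℕ} (f : Euc n × Euc m → ℝ) (α : ℝ) (p : Euc n × Euc m) :
    Matrix ((Fin n ⊕ Fin m) ⊕ (Fin n ⊕ Fin m)) ((Fin n ⊕ Fin m) ⊕ (Fin n ⊕ Fin m)) ℝ :=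
  Matrix.fromBlocks (1 + (2 * α) • Hmat f p) ((-α) • Hmat f p) 1 0

/-!
`J_OGDA = [[2J - 1, 1 - J], [1, 0]]` with `J = J_GDA`. Like a companion matrix, its complex
eigenvectors for `λ` are exactly the vectors `(λ v, v)` with `v ≠ 0` and
`(2λ - 1) J v = (λ² + λ - 1) v`. For `λ ≠ 1/2` this says that `v` is an eigenvector of `J` for
`(λ² + λ - 1)/(2λ - 1)`, while for `λ = 1/2` it forces `v = 0`.
-/

namespace Matrix

variable {ι K : Type*} [Fintype ι] [DecidableEq ι] [Field K]

theorem mem_spectrum_iff_exists_mulVec_eq_smul (M : Matrix ι ι K) (μ : K) :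
    μ ∈ spectrum K M ↔ ∃ v, v ≠ 0 ∧ M *ᵥ v = μ • v := by
  rw [← spectrum_toLin', ← Module.End.hasEigenvalue_iff_mem_spectrum,
    Module.End.hasEigenvalue_iff, Submodule.ne_bot_iff]
  simp only [Module.End.mem_eigenspace_iff, toLin'_apply, and_comm]

theorem mem_spectrum_fromBlocks_one_zero_iff (B C : Matrix ι ι K) (μ : K) :
    μ ∈ spectrum K (fromBlocks B C 1 0 : Matrix (ι ⊕ ι) (ι ⊕ ι) K) ↔
      ∃ v, v ≠ 0 ∧ μ • (B *ᵥ v) + C *ᵥ v = μ ^ 2 • v := by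
  simp only [mem_spectrum_iff_exists_mulVec_eq_smul, fromBlocks_mulVec, one_mulVec,
    zero_mulVec, add_zero]
  constructor
  · rintro ⟨w, hw, h⟩
    have htop := congrArg (· ∘ Sum.inl) h
    have hbot : w ∘ Sum.inl = μ • (w ∘ Sum.inr) := congrArg (· ∘ Sum.inr) h
    refine ⟨w ∘ Sum.inr, fun hv => hw ?_, ?_⟩
    · ext (i | i)
      · simpa [hv] using congrFun hbot i
      · exact congrFun hv i
    · simp only [Sum.elim_comp_inl] at htop
      rw [hbot, mulVec_smul] at htop
      rw [htop, pow_two, mul_smul, ← hbot]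
      rfl
  · rintro ⟨v, hv, h⟩
    refine ⟨Sum.elim (μ • v) v, fun h0 => hv (funext fun i => congrFun h0 (Sum.inr i)), ?_⟩
    rw [Sum.elim_comp_inl, Sum.elim_comp_inr, mulVec_smul, h, pow_two, mul_smul]
    ext (i | i) <;> rfl

theorem mem_spectrum_fromBlocks_two_smul_sub_one_iff (A : Matrix ι ι K) (μ : K) :
    μ ∈ spectrum K (fromBlocks ((2 : K) • A - 1) (1 - A) 1 0 : Matrix (ι ⊕ ι) (ι ⊕ ι) K) ↔
      ∃ v, v ≠ 0 ∧ (2 * μ - 1) • (A *ᵥ v) = (μ ^ 2 + μ - 1) • v := by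
  rw [mem_spectrum_fromBlocks_one_zero_iff]
  simp only [sub_mulVec, smul_mulVec, one_mulVec]
  refine exists_congr fun v => and_congr_right fun _ => ⟨fun h => ?_, fun h => ?_⟩ <;>
    linear_combination (norm := module) h

end Matrix

open Matrix

theorem Jogda_eq_fromBlocks {n m : ℕ} (f : Euc n × Euc m → ℝ) (α : ℝ) (p : Euc n × Euc m) :
    Jogda f α p = fromBlocks ((2 : ℝ) • Jgda f α p - 1) (1 - Jgda f α p) 1 0 := by
  rw [Jogda, Jgda]
  congr 1 <;> module

theorem map_ofReal_Jogda {n m : ℕ} (f : Euc n × Euc m → ℝ) (α : ℝ) (p : Euc n × Euc m) :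
    (Jogda f α p).map Complex.ofReal =
      fromBlocks ((2 : ℂ) • (Jgda f α p).map Complex.ofReal - 1)
        (1 - (Jgda f α p).map Complex.ofReal) 1 0 := by
  rw [Jogda_eq_fromBlocks, fromBlocks_map]
  congr 1 <;> ext i j <;> simp [one_apply, apply_ite Complex.ofReal]

theorem ogda_gda_eigenvalue_correspondence_general {n m : ℕ} (f : Euc n × Euc m → ℝ) (α : ℝ)
    (pstar : Euc n × Euc m) :
    (∀ lam : ℂ, lam ≠ 1 / 2 →
      (lam ∈ specC (Jogda f α pstar) ↔
        (lam ^ 2 + lam - 1) / (2 * lam - 1) ∈ specC (Jgda f α pstar))) ∧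
    (1 / 2 : ℂ) ∉ specC (Jogda f α pstar) ∧
    (∀ r : ℂ, (1 + r) ∈ specC (Jgda f α pstar) →
      ∀ lam : ℂ, lam ^ 2 - (1 + 2 * r) * lam + r = 0 → lam ∈ specC (Jogda f α pstar)) := by
  set A := (Jgda f α pstar).map Complex.ofReal
  have hogda (lam : ℂ) : lam ∈ specC (Jogda f α pstar) ↔
      ∃ v, v ≠ 0 ∧ (2 * lam - 1) • (A *ᵥ v) = (lam ^ 2 + lam - 1) • v := by
    rw [specC, map_ofReal_Jogda, mem_spectrum_fromBlocks_two_smul_sub_one_iff]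
  refine ⟨fun lam hlam => ?_, fun hhalf => ?_, fun r hr lam hlam => ?_⟩
  · have h2 : 2 * lam - 1 ≠ 0 := fun h => hlam (by linear_combination h / 2)
    rw [hogda, specC, mem_spectrum_iff_exists_mulVec_eq_smul]
    refine exists_congr fun v => and_congr_right fun _ => ?_
    rw [div_eq_inv_mul, mul_smul, eq_inv_smul_iff₀ h2]
  · obtain ⟨v, hv, h⟩ := (hogda _).1 hhalf
    -- at `λ = 1/2` the relation reads `0 = -(1/4) • v`
    norm_num at h
    exact hv h
  · obtain ⟨v, hv, h⟩ := (mem_spectrum_iff_exists_mulVec_eq_smul A (1 + r)).1 hr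
    refine (hogda lam).2 ⟨v, hv, ?_⟩
    rw [h, smul_smul]
    congr 1
    linear_combination -hlam

/-- Let `(x*,y*)` be a critical point of a twice continuously
differentiable `f` and `α > 0`.  With `J_GDA = I + αH(x*,y*)` and `J_OGDA` the OGDA
Jacobian at `(x*,y*,x*,y*)`: for every `λ ≠ 1/2`, `λ` is an eigenvalue of `J_OGDA`
iff `(λ² + λ - 1)/(2λ - 1)` is an eigenvalue of `J_GDA`; moreover `1/2` is never an
eigenvalue of `J_OGDA`, and if `1 + r` is an eigenvalue of `J_GDA` then every root of
`λ² - (1 + 2r)λ + r = 0` is an eigenvalue of `J_OGDA`. -/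
theorem ogda_gda_eigenvalue_correspondence {n m : ℕ} (f : Euc n × Euc m → ℝ) (α : ℝ)
    (hα : 0 < α) (hf : ContDiff ℝ 2 f)
    (pstar : Euc n × Euc m) (hcrit : fderiv ℝ f pstar = 0) :
    (∀ lam : ℂ, lam ≠ 1 / 2 →
      (lam ∈ specC (Jogda f α pstar) ↔
        (lam ^ 2 + lam - 1) / (2 * lam - 1) ∈ specC (Jgda f α pstar))) ∧
    (1 / 2 : ℂ) ∉ specC (Jogda f α pstar) ∧
    (∀ r : ℂ, (1 + r) ∈ specC (Jgda f α pstar) →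
      ∀ lam : ℂ, lam ^ 2 - (1 + 2 * r) * lam + r = 0 → lam ∈ specC (Jogda f α pstar)) :=
  ogda_gda_eigenvalue_correspondence_general f α pstar
end
end

section
/- Let r ∈ ℂ satisfy |r| < 1/2 and |1 + r| ≤ 1. Then every complex root λ of the quadratic equation λ² - (1 + 2r)λ + r = 0 satisfies |λ| ≤ 1. Equivalently, both numbers r + 1/2 + (1/2)√(4r² + 1) and r + 1/2 - (1/2)√(4r² + 1) (for either choice of complex square root) have modulus at most 1. -/
/-!
Substituting `p = 2λ - 1` turns the equation into `p² = 4rp + 1`, and `|λ| ≤ 1` becomes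
`|1 + p| ≤ 2`, which is clear when `|p| ≤ 1`. When `|p| > 1`, the real part of
`4r|p|² = p|p|² - p̄` (the equation times `p̄`) shows that `Re p` has the sign of `Re r`, and
`|1 + r| ≤ 1` forces `Re r ≤ 0`. Then `|p² - 1|² = (|p|² + 1)² - 4 (Re p)²` together with
`|p² - 1| = 4|r||p| < 2|p|` gives `|p|² - 1 < -2 Re p`, i.e. `|1 + p|² < 2`.
-/

namespace Complex

theorem re_nonpos_of_norm_one_add_le_one {z : ℂ} (h : ‖1 + z‖ ≤ 1) : z.re ≤ 0 := by
  have := (re_le_norm (1 + z)).trans h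
  simp only [add_re, one_re] at this
  linarith

theorem sq_norm_one_add (p : ℂ) : ‖1 + p‖ ^ 2 = ‖p‖ ^ 2 + 2 * p.re + 1 := by
  simp only [Complex.sq_norm, normSq_apply, add_re, one_re, add_im, one_im]
  ring

theorem sq_norm_sq_sub_one (p : ℂ) : ‖p ^ 2 - 1‖ ^ 2 = (‖p‖ ^ 2 + 1) ^ 2 - 4 * p.re ^ 2 := by
  rw [Complex.sq_norm, Complex.sq_norm]
  simp only [normSq_apply, sub_re, sub_im, one_re, one_im, pow_two, mul_re, mul_im]
  ring

theorem re_mul_sq_norm_of_sq_eq {p r : ℂ} (hp : p ^ 2 = 4 * r * p + 1) :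
    4 * r.re * ‖p‖ ^ 2 = p.re * (‖p‖ ^ 2 - 1) := by
  have hre := congrArg re hp
  have him := congrArg im hp
  simp only [pow_two, mul_re, mul_im, add_re, add_im, one_re, one_im, re_ofNat, im_ofNat]
    at hre him
  rw [Complex.sq_norm, normSq_apply]
  linear_combination -p.re * hre - p.im * him

theorem sq_norm_one_add_lt_two_of_sq_eq {p r : ℂ} (hp : p ^ 2 = 4 * r * p + 1)
    (hr : ‖r‖ < 1 / 2) (hre : r.re ≤ 0) (hp1 : 1 < ‖p‖) : ‖1 + p‖ ^ 2 < 2 := by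
  have hN : 1 < ‖p‖ ^ 2 := one_lt_pow₀ hp1 two_ne_zero
  have hp_re : p.re ≤ 0 := by
    have := re_mul_sq_norm_of_sq_eq hp
    nlinarith
  have hsub : ‖p ^ 2 - 1‖ < 2 * ‖p‖ := by
    rw [hp, add_sub_cancel_right, norm_mul, norm_mul, RCLike.norm_ofNat]
    nlinarith
  have hsq : (‖p‖ ^ 2 - 1) ^ 2 < (-2 * p.re) ^ 2 := by
    have := pow_lt_pow_left₀ hsub (norm_nonneg _) two_ne_zero
    rw [sq_norm_sq_sub_one] at this
    nlinarith
  have := lt_of_pow_lt_pow_left₀ 2 (by linarith) hsq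
  rw [sq_norm_one_add]
  linarith

theorem norm_one_add_le_two_of_sq_eq {p r : ℂ} (hp : p ^ 2 = 4 * r * p + 1)
    (hr : ‖r‖ < 1 / 2) (hr1 : ‖1 + r‖ ≤ 1) : ‖1 + p‖ ≤ 2 := by
  rcases le_or_gt ‖p‖ 1 with hp1 | hp1
  · calc ‖1 + p‖ ≤ ‖(1 : ℂ)‖ + ‖p‖ := norm_add_le _ _
      _ ≤ 2 := by rw [norm_one]; linarith
  · have := sq_norm_one_add_lt_two_of_sq_eq hp hr (re_nonpos_of_norm_one_add_le_one hr1) hp1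
    nlinarith [norm_nonneg (1 + p)]

theorem norm_le_one_of_quadratic_eq_zero {r lam : ℂ} (hr : ‖r‖ < 1 / 2) (hr1 : ‖1 + r‖ ≤ 1)
    (h : lam ^ 2 - (1 + 2 * r) * lam + r = 0) : ‖lam‖ ≤ 1 := by
  have := norm_one_add_le_two_of_sq_eq (p := 2 * lam - 1) (by linear_combination 4 * h) hr hr1
  rw [add_sub_cancel, norm_mul, RCLike.norm_ofNat] at this
  linarith

end Complex

/-- If `r ∈ ℂ` satisfies `|r| < 1/2` and `|1 + r| ≤ 1`, then every
complex root `λ` of `λ² - (1 + 2r)λ + r = 0` satisfies `|λ| ≤ 1`; equivalently, for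
either choice `s` of complex square root of `4r² + 1`, both `r + 1/2 + s/2` and
`r + 1/2 - s/2` have modulus at most `1`. -/
theorem quadratic_roots_in_unit_disc (r : ℂ) (hr : ‖r‖ < 1 / 2) (hr1 : ‖1 + r‖ ≤ 1) :
    (∀ lam : ℂ, lam ^ 2 - (1 + 2 * r) * lam + r = 0 → ‖lam‖ ≤ 1) ∧
    (∀ s : ℂ, s ^ 2 = 4 * r ^ 2 + 1 →
      ‖r + 1 / 2 + s / 2‖ ≤ 1 ∧ ‖r + 1 / 2 - s / 2‖ ≤ 1) := by
  refine ⟨fun lam h => Complex.norm_le_one_of_quadratic_eq_zero hr hr1 h, fun s hs => ⟨?_, ?_⟩⟩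
  · exact Complex.norm_le_one_of_quadratic_eq_zero hr hr1 (by linear_combination hs / 4)
  · exact Complex.norm_le_one_of_quadratic_eq_zero hr hr1 (by linear_combination hs / 4)
end

section
/- Let f(x,y) = xy on ℝ² and 0 < α < 1/2. The Jacobian of the GDA map at the critical point (0,0) is [[1, -α],[α, 1]], whose eigenvalues 1 ± αi both have modulus √(1+α²) > 1, so (0,0) is GDA-unstable. In contrast, the Jacobian of the OGDA map at the fixed point (0,0,0,0) is the 4×4 matrix [[1, -2α, 0, α],[2α, 1, -α, 0],[1, 0, 0, 0],[0, 1, 0, 0]], and all four of its complex eigenvalues have modulus at most 1, so (0,0,0,0) is OGDA-stable. Hence there exist critical points that are OGDA-stable but not GDA-stable. -/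
/-!
The GDA Jacobian has characteristic polynomial `(μ - 1)² + α²`, with roots `1 ± αi` outside
the unit disc. The characteristic polynomial of the OGDA Jacobian factors as `q_α · q_{-α}` with
`q_b(μ) = μ² - (1 + 2bi)μ + bi`. Substituting `μ = ν + bi` turns `q_b` into `ν² - ν + b²`, whose
roots `ν = (1 ± √(1 - 4b²))/2` are real when `|b| ≤ 1/2`; then `|μ|² = ν² + b² = ν ≤ 1`.
-/

open Matrix Complex

def gdaJacobianBilinear (α : ℝ) : Matrix (Fin 2) (Fin 2) ℝ :=
  !![1, -α; α, 1]

def ogdaJacobianBilinear (α : ℝ) : Matrix (Fin 4) (Fin 4) ℝ :=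
  !![1, -2 * α, 0, α; 2 * α, 1, -α, 0; 1, 0, 0, 0; 0, 1, 0, 0]

theorem Matrix.mem_spectrum_iff_det_scalar_sub_eq_zero {K n : Type*} [Field K] [Fintype n]
    [DecidableEq n] (A : Matrix n n K) (μ : K) :
    μ ∈ spectrum K A ↔ (scalar n μ - A).det = 0 := by
  rw [mem_spectrum_iff_isRoot_charpoly, Polynomial.IsRoot.def, eval_charpoly]

theorem det_scalar_sub_gdaJacobianBilinear (α : ℝ) (μ : ℂ) :
    (scalar (Fin 2) μ - (gdaJacobianBilinear α).map ofReal).det = (μ - 1) ^ 2 + α ^ 2 := by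
  simp [gdaJacobianBilinear, det_fin_two]
  ring

theorem det_scalar_sub_ogdaJacobianBilinear (α : ℝ) (μ : ℂ) :
    (scalar (Fin 4) μ - (ogdaJacobianBilinear α).map ofReal).det =
      (μ ^ 2 - (1 + 2 * α * I) * μ + α * I) *
        (μ ^ 2 - (1 + 2 * (-α : ℝ) * I) * μ + (-α : ℝ) * I) := by
  simp [ogdaJacobianBilinear, det_succ_row_zero, Fin.sum_univ_succ, Fin.succAbove,
    Fin.castSucc, Fin.castAdd, Fin.castLE]
  linear_combination ((α : ℂ) - 2 * α * μ) ^ 2 * I_sq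

theorem Complex.norm_one_add_mul_I (b : ℝ) : ‖1 + b * I‖ = √(1 + b ^ 2) := by
  simpa using norm_add_mul_I 1 b

theorem norm_le_one_of_sq_sub_mul_add_eq_zero {b : ℝ} (hb : 4 * b ^ 2 ≤ 1) {μ : ℂ}
    (hμ : μ ^ 2 - (1 + 2 * b * I) * μ + b * I = 0) : ‖μ‖ ≤ 1 := by
  set s := √(1 - 4 * b ^ 2)
  have hs : s ^ 2 = 1 - 4 * b ^ 2 := Real.sq_sqrt (by linarith)
  have hs_nonneg : 0 ≤ s := Real.sqrt_nonneg _
  have hs_le : s ≤ 1 := Real.sqrt_le_one.mpr (by nlinarith)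
  have hroots : (μ - (((1 + s) / 2 : ℝ) + b * I)) * (μ - (((1 - s) / 2 : ℝ) + b * I)) = 0 := by
    have hsC : (s : ℂ) ^ 2 = 1 - 4 * (b : ℂ) ^ 2 := by exact_mod_cast hs
    push_cast
    linear_combination hμ + (b : ℂ) ^ 2 * I_sq - hsC / 4
  rcases mul_eq_zero.mp hroots with h | h <;>
    rw [sub_eq_zero.mp h, norm_add_mul_I, Real.sqrt_le_one] <;> nlinarith

/-- For `f(x,y) = xy` and `0 < α < 1/2`: the GDA Jacobian at the
origin `[[1, -α], [α, 1]]` has eigenvalues `1 ± αi`, both of modulus `√(1+α²) > 1`, so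
the origin is GDA-unstable; in contrast every complex eigenvalue of the OGDA Jacobian
`[[1, -2α, 0, α], [2α, 1, -α, 0], [1, 0, 0, 0], [0, 1, 0, 0]]` at the origin has
modulus at most `1`, so the origin is OGDA-stable.  Hence there exist critical points
that are OGDA-stable but not GDA-stable. -/
theorem ogda_stable_not_gda_stable_example (α : ℝ) (hα : 0 < α) (hα' : α < 1 / 2) :
    ((1 + α * Complex.I) ∈ spectrum ℂ ((!![1, -α; α, 1]).map Complex.ofReal) ∧
     (1 - α * Complex.I) ∈ spectrum ℂ ((!![1, -α; α, 1]).map Complex.ofReal) ∧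
     ‖1 + α * Complex.I‖ = Real.sqrt (1 + α ^ 2) ∧
     ‖1 - α * Complex.I‖ = Real.sqrt (1 + α ^ 2) ∧
     1 < Real.sqrt (1 + α ^ 2)) ∧
    (∀ μ ∈ spectrum ℂ
        ((!![1, -2 * α, 0, α; 2 * α, 1, -α, 0; 1, 0, 0, 0; 0, 1, 0, 0]).map
          Complex.ofReal),
      ‖μ‖ ≤ 1) := by
  change (_ ∈ spectrum ℂ ((gdaJacobianBilinear α).map ofReal) ∧
      _ ∈ spectrum ℂ ((gdaJacobianBilinear α).map ofReal) ∧ _) ∧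
    ∀ μ ∈ spectrum ℂ ((ogdaJacobianBilinear α).map ofReal), _
  simp only [mem_spectrum_iff_det_scalar_sub_eq_zero, det_scalar_sub_gdaJacobianBilinear,
    det_scalar_sub_ogdaJacobianBilinear, mul_eq_zero]
  refine ⟨⟨?_, ?_, norm_one_add_mul_I α, ?_, ?_⟩, ?_⟩
  · linear_combination (α : ℂ) ^ 2 * I_sq
  · linear_combination (α : ℂ) ^ 2 * I_sq
  · simpa [sub_eq_add_neg] using norm_one_add_mul_I (-α)
  · exact Real.lt_sqrt zero_le_one |>.mpr (by nlinarith)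
  · rintro μ (hμ | hμ) <;>
      exact norm_le_one_of_sq_sub_mul_add_eq_zero (by nlinarith) hμ
end

section
/- For every real x with 0 < x < 1/2, each of the four complex numbers (1/2)(1 ± √(1 - 8x² ± 4√(4x⁴ - x²))) (all four sign combinations, where √ denotes a complex square root) has modulus at most 1. -/
/-!
Since `4x⁴ - x² ≤ 0`, the square root `s` is purely imaginary with `|s|² = x² - 4x⁴`, so
`|t²|² = (1 - 8x²)² + 16 (x² - 4x⁴) = 1`. Hence `|t| = 1`, and `|(1 ± t)/2| ≤ 1` by the
triangle inequality.
-/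

namespace Complex

theorem re_eq_zero_of_sq_eq_ofReal_of_nonpos {s : ℂ} {r : ℝ} (hs : s ^ 2 = r) (hr : r ≤ 0) :
    s.re = 0 := by
  have hre : s.re ^ 2 - s.im ^ 2 = r := by simpa [sq] using congrArg re hs
  have him : 2 * (s.re * s.im) = 0 := by
    have := congrArg im hs
    simp only [sq, mul_im, ofReal_im] at this
    linarith
  rcases mul_eq_zero.mp ((mul_eq_zero.mp him).resolve_left two_ne_zero) with h | h
  · exact h
  · nlinarith [sq_nonneg s.re]

theorem normSq_eq_abs_of_sq_eq_ofReal {s : ℂ} {r : ℝ} (hs : s ^ 2 = r) : normSq s = |r| := by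
  rw [normSq_eq_norm_sq, ← norm_pow, hs, norm_real, Real.norm_eq_abs]

theorem normSq_ofReal_add_of_re_eq_zero (a : ℝ) {s : ℂ} (hs : s.re = 0) :
    normSq (a + s) = a ^ 2 + normSq s := by
  simp [normSq_apply, hs, sq]

theorem norm_half_mul_one_add_le_one {t : ℂ} (ht : ‖t‖ ≤ 1) : ‖(1 / 2 : ℂ) * (1 + t)‖ ≤ 1 := by
  calc ‖(1 / 2 : ℂ) * (1 + t)‖ = ‖(1 : ℂ) + t‖ / 2 := by simp; ring
    _ ≤ (‖(1 : ℂ)‖ + ‖t‖) / 2 := by gcongr; exact norm_add_le _ _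
    _ ≤ 1 := by rw [norm_one]; linarith

end Complex

open Complex

theorem norm_eq_one_of_sq_eq_one_sub_eight_mul_sq_add {x : ℝ} (hx : x ^ 2 ≤ 1 / 4) {s t : ℂ}
    (hs : s ^ 2 = ((4 * x ^ 4 - x ^ 2 : ℝ) : ℂ)) (ht : t ^ 2 = 1 - 8 * (x : ℂ) ^ 2 + 4 * s) :
    ‖t‖ = 1 := by
  have hr : 4 * x ^ 4 - x ^ 2 ≤ 0 := by nlinarith [sq_nonneg x]
  have hre : (4 * s).re = 0 := by simp [re_eq_zero_of_sq_eq_ofReal_of_nonpos hs hr]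
  have hnormSq : normSq (4 * s) = 16 * (x ^ 2 - 4 * x ^ 4) := by
    rw [normSq_mul, normSq_eq_abs_of_sq_eq_ofReal hs, abs_of_nonpos hr]
    norm_num
  have ht' : t ^ 2 = ((1 - 8 * x ^ 2 : ℝ) : ℂ) + 4 * s := by rw [ht]; push_cast; ring
  have hsq : ‖t‖ ^ 4 = 1 := by
    rw [show 4 = 2 * 2 by rfl, pow_mul, ← norm_pow, ← normSq_eq_norm_sq, ht',
      normSq_ofReal_add_of_re_eq_zero _ hre, hnormSq]
    ring
  exact (pow_eq_one_iff_of_nonneg (norm_nonneg t) (by norm_num)).mp hsq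

/-- For every real `x` with `0 < x < 1/2`, each of the four complex
numbers `(1/2)(1 ± √(1 - 8x² ± 4√(4x⁴ - x²)))` (all four sign combinations, for any
choices of the complex square roots) has modulus at most `1`. -/
theorem ogda_example_eigenvalues_bounded (x : ℝ) (hx : 0 < x) (hx' : x < 1 / 2) :
    ∀ s t : ℂ, s ^ 2 = ((4 * x ^ 4 - x ^ 2 : ℝ) : ℂ) →
      t ^ 2 = 1 - 8 * (x : ℂ) ^ 2 + 4 * s →
      ‖(1 / 2 : ℂ) * (1 + t)‖ ≤ 1 ∧ ‖(1 / 2 : ℂ) * (1 - t)‖ ≤ 1 := by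
  intro s t hs ht
  have hnorm : ‖t‖ = 1 := norm_eq_one_of_sq_eq_one_sub_eight_mul_sq_add (by nlinarith) hs ht
  refine ⟨norm_half_mul_one_add_le_one hnorm.le, ?_⟩
  simpa [sub_eq_add_neg] using norm_half_mul_one_add_le_one (t := -t) (by simpa using hnorm.le)
end
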